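/- arXiv:1602.04034 — 2 statements merged into one kernel-verified Lean document; each statement's English description precedes it below -/
import Mathlib

section
/- For every n ≥ 1 and every integer m with 0 ≤ m ≤ 2^{n−1}, the m-section width of the set of symbol nodes of the n-polar decoding graph P_n is at least 2m; that is, every partition of the vertices of P_n into two parts such that one part contains exactly m symbol nodes has at least 2m edges joining the two parts. -/
/-- Vertex type of the polar decoding graph `P_{k+1}`.  `PV 0` is the vertex type of
`P_1` (two symbol nodes and two right-hand nodes), and the vertices of `P_{k+2}` are
`2^(k+2)` new symbol nodes together with two disjoint copies of the vertices of
`P_{k+1}`. -/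
def PV : ℕ → Type
  | 0 => Fin 2 ⊕ Fin 2
  | k + 1 => Fin (2 ^ (k + 2)) ⊕ (PV k ⊕ PV k)

/-- The `i`-th symbol node of `P_{k+1}` (there are `2^(k+1)` of them). -/
def sym : (k : ℕ) → Fin (2 ^ (k + 1)) → PV k
  | 0, i => Sum.inl i
  | _ + 1, i => Sum.inl i

/-- The polar decoding graph `P_{k+1}` on vertex type `PV k`.  `P_1` is the complete
bipartite graph `K_{2,2}` whose two left vertices are its symbol nodes.  `P_{k+2}`
consists of `2^(k+2)` symbol nodes together with two copies of `P_{k+1}`; the symbol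
nodes `a_{2i}` and `a_{2i+1}` (0-indexed) are joined to the `i`-th symbol node of each
copy, giving the `i`-th bowtie. -/
def PG : (k : ℕ) → SimpleGraph (PV k)
  | 0 => SimpleGraph.fromRel (fun u v => u.isLeft ∧ v.isRight)
  | k + 1 =>
    SimpleGraph.fromRel (fun u v =>
      match u, v with
      | Sum.inl j, Sum.inr w =>
          ∃ i : Fin (2 ^ (k + 1)), (j : ℕ) / 2 = (i : ℕ) ∧
            (w = Sum.inl (sym k i) ∨ w = Sum.inr (sym k i))
      | Sum.inr (Sum.inl a), Sum.inr (Sum.inl b) => (PG k).Adj a b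
      | Sum.inr (Sum.inr a), Sum.inr (Sum.inr b) => (PG k).Adj a b
      | _, _ => False)

/-- The width of the partition `(A, Aᶜ)` of the vertices of `G`: the number of edges
of `G` with one endpoint in `A` and the other outside `A`. -/
noncomputable def partWidth {V : Type} (G : SimpleGraph V) (A : Set V) : ℕ :=
  {p : V × V | p.1 ∈ A ∧ p.2 ∉ A ∧ G.Adj p.1 p.2}.ncard

/-!
Induct on the stronger claim that a partition with `s` of the `2 ^ (k + 1)` symbol nodes of
`PG k` on its first side has width at least `2 * min s (2 ^ (k + 1) - s)`; for `s ≤ 2 ^ k` this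
is `2 * s`.

The cut edges of `P_{k+2}` are the cut edges inside its two copies of `P_{k+1}` together with the
cut bowtie edges into each copy. If `q` symbol nodes of one copy lie in `A`, then, as each of them
is joined to exactly two new symbol nodes, at least `|s - 2 q|` bowtie edges into that copy are
cut, while by induction at least `min (2 q) (2 ^ (k + 2) - 2 q)` edges inside it are. As
`x ↦ min x (N - x)` is 1-Lipschitz, each copy contributes at least `min s (2 ^ (k + 2) - s)`.
In `P_1 = K_{2,2}` each right vertex is joined to both symbol nodes, so it lies on a cut edge
whenever they are separated.
-/

open Finset

section

open scoped Classical

theorem partWidth_eq_sum {V : Type} [Fintype V] (G : SimpleGraph V) (A : Set V) :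
    partWidth G A = ∑ u, ∑ v, if u ∈ A ∧ v ∉ A ∧ G.Adj u v then 1 else 0 := by
  rw [← Fintype.sum_prod_type', ← card_filter, ← Set.ncard_coe_finset, partWidth]
  congr 1
  ext
  simp

theorem Fintype.sum_ite_and_eq {α : Type*} [Fintype α] (p : α → Prop) (c : α)
    [DecidablePred fun x => p x ∧ x = c] [Decidable (p c)] :
    (∑ x, if p x ∧ x = c then 1 else 0 : ℕ) = if p c then 1 else 0 := by
  rw [Fintype.sum_eq_single c fun x hx => if_neg fun h => hx h.2]
  simp

theorem Fintype.sum_sum_ite_and_eq_right {α β : Type*} [Fintype α] [Fintype β]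
    (p : α → β → Prop) (c : α → β) [∀ x, DecidablePred fun y => p x y ∧ y = c x]
    [DecidablePred fun x => p x (c x)] :
    (∑ x, ∑ y, if p x y ∧ y = c x then 1 else 0 : ℕ) = #{x | p x (c x)} := by
  rw [card_filter]
  exact Fintype.sum_congr _ _ fun x => Fintype.sum_ite_and_eq (p x) (c x)

theorem Fintype.sum_sum_ite_and_eq_left {α β : Type*} [Fintype α] [Fintype β]
    (p : α → β → Prop) (c : β → α) [∀ y, DecidablePred fun x => p x y ∧ x = c y]
    [DecidablePred fun y => p (c y) y] :
    (∑ x, ∑ y, if p x y ∧ x = c y then 1 else 0 : ℕ) = #{y | p (c y) y} := by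
  rw [Finset.sum_comm, card_filter]
  exact Fintype.sum_congr _ _ fun y => Fintype.sum_ite_and_eq (p · y) (c y)

theorem Finset.min_card_tsub_card_le {α : Type*} [DecidableEq α] (S U : Finset α) (n : ℕ) :
    min #S (n - #S) ≤ #(S \ U) + #(U \ S) + min #U (n - #U) := by
  have := card_le_card_sdiff_add_card (s := S) (t := U)
  have := card_le_card_sdiff_add_card (s := U) (t := S)
  omega

instance PV.instFintype : (k : ℕ) → Fintype (PV k)
  | 0 => inferInstanceAs (Fintype (Fin 2 ⊕ Fin 2))
  | k + 1 =>
    haveI := PV.instFintype k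
    inferInstanceAs (Fintype (Fin (2 ^ (k + 2)) ⊕ (PV k ⊕ PV k)))

namespace PV

def copyB (k : ℕ) (w : PV k) : PV (k + 1) := Sum.inr (Sum.inl w)

def copyC (k : ℕ) (w : PV k) : PV (k + 1) := Sum.inr (Sum.inr w)

theorem sum_zero {M : Type*} [AddCommMonoid M] (f : PV 0 → M) :
    ∑ v, f v = ∑ t, f (sym 0 t) + ∑ r : Fin 2, f (Sum.inr r) :=
  Fintype.sum_sum_type f

theorem sum_succ {M : Type*} [AddCommMonoid M] (k : ℕ) (f : PV (k + 1) → M) :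
    ∑ v, f v = ∑ j, f (sym (k + 1) j) + (∑ w, f (copyB k w) + ∑ w, f (copyC k w)) :=
  (Fintype.sum_sum_type f).trans (congrArg _ (Fintype.sum_sum_type _))

end PV

theorem sym_zero (t : Fin (2 ^ (0 + 1))) : sym 0 t = Sum.inl t := rfl

theorem sym_succ (k : ℕ) (j : Fin (2 ^ (k + 1 + 1))) : sym (k + 1) j = Sum.inl j := rfl

theorem sym_injective (k : ℕ) : Function.Injective (sym k) := by
  cases k <;> exact Sum.inl_injective

theorem ncard_inter_range_sym (k : ℕ) (A : Set (PV k)) :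
    (A ∩ Set.range (sym k)).ncard = #{i | sym k i ∈ A} := by
  rw [← Set.ncard_coe_finset, coe_filter_univ, ← Set.ncard_image_of_injective _ (sym_injective k),
    ← Set.preimage_ofPred_eq, Set.image_preimage_eq_inter_range, Set.ofPred_mem_eq]

/-- The domain is `Fin (2 ^ (k + 1 + 1))`, that of `sym (k + 1)`, rather than the defeq
`Fin (2 ^ (k + 2))`: finsets over the two types are not syntactically equal, and the counts
below must match the ones arising from `sym (k + 1)`. -/
def bowtie (k : ℕ) (j : Fin (2 ^ (k + 1 + 1))) : Fin (2 ^ (k + 1)) :=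
  ⟨j / 2, Nat.div_lt_of_lt_mul (by rw [← pow_succ']; exact j.isLt)⟩

theorem card_bowtie_eq (k : ℕ) (i : Fin (2 ^ (k + 1))) : #{j | bowtie k j = i} = 2 := by
  have h : 2 ^ (k + 1 + 1) = 2 * 2 ^ (k + 1) := pow_succ' 2 (k + 1)
  rw [card_eq_two]
  refine ⟨⟨2 * i, by omega⟩, ⟨2 * i + 1, by omega⟩, by simp [Fin.ext_iff], ?_⟩
  ext j
  simp only [bowtie, mem_filter, mem_univ, true_and, mem_insert, mem_singleton, Fin.ext_iff]
  omega

theorem card_filter_bowtie (k : ℕ) (q : Fin (2 ^ (k + 1)) → Prop) [DecidablePred q] :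
    #{j | q (bowtie k j)} = 2 * #{i | q i} := by
  rw [card_eq_sum_card_fiberwise (f := bowtie k) (t := {i | q i}) (fun j hj => by simpa using hj),
    mul_comm, ← smul_eq_mul, ← sum_const]
  refine sum_congr rfl fun i hi => ?_
  rw [filter_filter]
  refine (congrArg card ?_).trans (card_bowtie_eq k i)
  ext j
  simp only [mem_filter, mem_univ, true_and] at hi ⊢
  exact and_iff_right_of_imp fun h => h ▸ hi

theorem min_card_tsub_card_le_of_bowtie (k : ℕ) (p : Fin (2 ^ (k + 1 + 1)) → Prop)
    (q : Fin (2 ^ (k + 1)) → Prop) [DecidablePred p] [DecidablePred q] (w : ℕ)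
    (hw : 2 * min #{i | q i} (2 ^ (k + 1) - #{i | q i}) ≤ w) :
    min #{j | p j} (2 ^ (k + 1 + 1) - #{j | p j}) ≤
      #{j | p j ∧ ¬ q (bowtie k j)} + #{j | q (bowtie k j) ∧ ¬ p j} + w := by
  have h := Finset.min_card_tsub_card_le {j | p j} {j | q (bowtie k j)} (2 ^ (k + 1 + 1))
  rw [← filter_and_not, ← filter_and_not, card_filter_bowtie] at h
  have : 2 ^ (k + 1 + 1) = 2 * 2 ^ (k + 1) := pow_succ' 2 (k + 1)
  omega

namespace PG

theorem adj_zero (u v : PV 0) : (PG 0).Adj u v ↔ u.isLeft ≠ v.isLeft := by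
  rw [PG, SimpleGraph.fromRel_adj]
  rcases u with t | r <;> rcases v with t' | r' <;> simp <;> exact fun h => nomatch h

theorem partWidth_zero (A : Set (PV 0)) :
    partWidth (PG 0) A = ∑ r : Fin 2,
      (#{t | sym 0 t ∈ A ∧ (Sum.inr r : PV 0) ∉ A} +
        #{t | (Sum.inr r : PV 0) ∈ A ∧ sym 0 t ∉ A}) := by
  simp only [partWidth_eq_sum, PV.sum_zero, adj_zero, sym_zero, Sum.isLeft_inl,
    Sum.isLeft_inr, ne_eq, not_true_eq_false, Bool.true_eq_false, Bool.false_eq_true,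
    not_false_eq_true, and_false, and_true, if_false, sum_const_zero, zero_add, add_zero,
    sum_add_distrib]
  rw [add_comm, Finset.sum_comm]
  congr 1 <;> exact Fintype.sum_congr _ _ fun r => (card_filter _ _).symm

section Succ

variable (k : ℕ)

theorem adj_sym_sym (j j' : Fin (2 ^ (k + 1 + 1))) :
    ¬ (PG (k + 1)).Adj (sym (k + 1) j) (sym (k + 1) j') := by
  rw [PG, SimpleGraph.fromRel_adj]
  simp [sym]

theorem adj_sym_copyB (j : Fin (2 ^ (k + 1 + 1))) (w : PV k) :
    (PG (k + 1)).Adj (sym (k + 1) j) (PV.copyB k w) ↔ w = sym k (bowtie k j) := by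
  rw [PG, SimpleGraph.fromRel_adj]
  simp only [sym_succ, PV.copyB, bowtie, Sum.inl.injEq, reduceCtorEq, or_false]
  exact ⟨fun ⟨_, i, hi, hw⟩ => hw.trans (congrArg (sym k) (Fin.ext hi.symm)),
    fun hw => ⟨Sum.inl_ne_inr, _, rfl, hw⟩⟩

theorem adj_sym_copyC (j : Fin (2 ^ (k + 1 + 1))) (w : PV k) :
    (PG (k + 1)).Adj (sym (k + 1) j) (PV.copyC k w) ↔ w = sym k (bowtie k j) := by
  rw [PG, SimpleGraph.fromRel_adj]
  simp only [sym_succ, PV.copyC, bowtie, Sum.inr.injEq, reduceCtorEq, false_or, or_false]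
  exact ⟨fun ⟨_, i, hi, hw⟩ => hw.trans (congrArg (sym k) (Fin.ext hi.symm)),
    fun hw => ⟨Sum.inl_ne_inr, _, rfl, hw⟩⟩

theorem adj_copyB_sym (j : Fin (2 ^ (k + 1 + 1))) (w : PV k) :
    (PG (k + 1)).Adj (PV.copyB k w) (sym (k + 1) j) ↔ w = sym k (bowtie k j) := by
  rw [SimpleGraph.adj_comm, adj_sym_copyB]

theorem adj_copyC_sym (j : Fin (2 ^ (k + 1 + 1))) (w : PV k) :
    (PG (k + 1)).Adj (PV.copyC k w) (sym (k + 1) j) ↔ w = sym k (bowtie k j) := by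
  rw [SimpleGraph.adj_comm, adj_sym_copyC]

theorem adj_copyB_copyB (w w' : PV k) :
    (PG (k + 1)).Adj (PV.copyB k w) (PV.copyB k w') ↔ (PG k).Adj w w' := by
  rw [PG, SimpleGraph.fromRel_adj]
  exact ⟨fun h => h.2.elim id .symm,
    fun h => ⟨fun e => h.ne (Sum.inl_injective (Sum.inr_injective e)), .inl h⟩⟩

theorem adj_copyC_copyC (w w' : PV k) :
    (PG (k + 1)).Adj (PV.copyC k w) (PV.copyC k w') ↔ (PG k).Adj w w' := by
  rw [PG, SimpleGraph.fromRel_adj]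
  exact ⟨fun h => h.2.elim id .symm,
    fun h => ⟨fun e => h.ne (Sum.inr_injective (Sum.inr_injective e)), .inl h⟩⟩

theorem adj_copyB_copyC (w w' : PV k) : ¬ (PG (k + 1)).Adj (PV.copyB k w) (PV.copyC k w') := by
  rw [PG, SimpleGraph.fromRel_adj]
  simp [PV.copyB, PV.copyC]

theorem adj_copyC_copyB (w w' : PV k) : ¬ (PG (k + 1)).Adj (PV.copyC k w) (PV.copyB k w') := by
  rw [SimpleGraph.adj_comm]
  exact adj_copyB_copyC k w' w

theorem partWidth_succ (A : Set (PV (k + 1))) :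
    partWidth (PG (k + 1)) A =
      (#{j | sym (k + 1) j ∈ A ∧ PV.copyB k (sym k (bowtie k j)) ∉ A} +
        #{j | PV.copyB k (sym k (bowtie k j)) ∈ A ∧ sym (k + 1) j ∉ A} +
        partWidth (PG k) (PV.copyB k ⁻¹' A)) +
      (#{j | sym (k + 1) j ∈ A ∧ PV.copyC k (sym k (bowtie k j)) ∉ A} +
        #{j | PV.copyC k (sym k (bowtie k j)) ∈ A ∧ sym (k + 1) j ∉ A} +
        partWidth (PG k) (PV.copyC k ⁻¹' A)) := by
  simp only [partWidth_eq_sum, PV.sum_succ, adj_sym_sym, adj_sym_copyB, adj_sym_copyC,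
    adj_copyB_sym, adj_copyC_sym, adj_copyB_copyB, adj_copyC_copyC, adj_copyB_copyC,
    adj_copyC_copyB, and_false, if_false, sum_const_zero, zero_add, add_zero, Set.mem_preimage,
    ← and_assoc, sum_add_distrib, Fintype.sum_sum_ite_and_eq_left,
    Fintype.sum_sum_ite_and_eq_right]
  omega

end Succ

theorem two_mul_min_le_partWidth_zero (A : Set (PV 0)) :
    2 * min #{t | sym 0 t ∈ A} (2 ^ (0 + 1) - #{t | sym 0 t ∈ A}) ≤ partWidth (PG 0) A := by
  set s := #{t | sym 0 t ∈ A}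
  have right_vertex_cut : ∀ r : Fin 2, min s (2 - s) ≤
      #{t | sym 0 t ∈ A ∧ (Sum.inr r : PV 0) ∉ A} +
        #{t | (Sum.inr r : PV 0) ∈ A ∧ sym 0 t ∉ A} := by
    intro r
    by_cases hr : (Sum.inr r : PV 0) ∈ A
    · simp only [hr, not_true_eq_false, and_false, true_and, filter_false, card_empty, zero_add,
        filter_not, card_sdiff_of_subset (filter_subset _ _), card_univ, Fintype.card_fin]
      exact min_le_right _ _
    · simp only [hr, not_false_eq_true, and_true, false_and, filter_false, card_empty, add_zero]
      exact min_le_left _ _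
  calc 2 * min s (2 ^ (0 + 1) - s) = #(univ : Finset (Fin 2)) • min s (2 - s) := by simp
    _ ≤ partWidth (PG 0) A := by
      rw [partWidth_zero]
      exact card_nsmul_le_sum _ _ _ fun r _ => right_vertex_cut r

theorem two_mul_min_le_partWidth (k : ℕ) (A : Set (PV k)) :
    2 * min #{i | sym k i ∈ A} (2 ^ (k + 1) - #{i | sym k i ∈ A}) ≤ partWidth (PG k) A := by
  induction k with
  | zero => exact two_mul_min_le_partWidth_zero A
  | succ k ih =>
    have copyB_bound := min_card_tsub_card_le_of_bowtie k (sym (k + 1) · ∈ A)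
      (fun i => PV.copyB k (sym k i) ∈ A) _ (ih (PV.copyB k ⁻¹' A))
    have copyC_bound := min_card_tsub_card_le_of_bowtie k (sym (k + 1) · ∈ A)
      (fun i => PV.copyC k (sym k i) ∈ A) _ (ih (PV.copyC k ⁻¹' A))
    rw [partWidth_succ]
    omega

end PG

end

/-- For every `n ≥ 1` (written `n = k + 1`) and every `m` with
`0 ≤ m ≤ 2^{n−1} = 2^k`, the `m`-section width of the set of symbol nodes of the
`n`-polar decoding graph `P_n = PG k` is at least `2m`: every partition `(A, Aᶜ)` of
the vertices with exactly `m` symbol nodes in `A` has at least `2m` crossing edges. -/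
theorem m_section_width_polar_decoding_graph (k m : ℕ) (hm : m ≤ 2 ^ k)
    (A : Set (PV k)) (hA : (A ∩ Set.range (sym k)).ncard = m) :
    2 * m ≤ partWidth (PG k) A := by
  have h := PG.two_mul_min_le_partWidth k A
  rw [← ncard_inter_range_sym, hA, pow_succ] at h
  omega
end

section
/- Let N = 2^n and let 𝒜̄ ⊆ {1, …, N} be a set of frozen indices defining an n-frozen bit polar decoding graph of rate R = 1 − |𝒜̄|/N with R > 2/3. Then the minimum bisection width ω of the set of unfrozen nodes of this graph satisfies ω ≥ N(3R − 2). -/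
/-!
The symbol nodes of `P_n` are 2-well-linked: for every colouring of the vertices, at least
`2 · min (#red symbols, #blue symbols)` edges join the two colours, counting only edges and
symbols that avoid the frozen nodes. `P_{n+1}` consists of two copies of `P_n` and a top layer
whose symbols `a_{2i}, a_{2i+1}` are both joined to the `i`-th symbol of each copy. Fix a copy:
each of its symbols serves at most two top symbols, so the top layer's minority count is at
most twice the copy's minority count (which its own cut edges pay for, by induction) plus the
number of bowtie edges into that copy whose ends differ in colour. Adding over the two copies
gives the factor 2. Frozen nodes only delete top symbols, and `P_1 = K_{2,2}` has the same
shape over a single vertex, so one induction step covers both cases.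

For a bisection of the `N - |𝒜̄|` unfrozen nodes the minority count is at least
`(N - |𝒜̄| - 1) / 2`, and exactly `N / 2` when nothing is frozen, so the width is at least
`N - 3|𝒜̄| = N(3R - 2)`.
-/

open Set Function

section

variable {V W ι κ : Type*}

def cutPairs (G : SimpleGraph V) (K A : Set V) : Set (V × V) :=
  {p | p.1 ∈ K ∧ p.2 ∈ K ∧ G.Adj p.1 p.2 ∧ p.1 ∈ A ∧ p.2 ∉ A}

def TwoWellLinked (G : SimpleGraph V) (K : Set V) (σ : ι → V) : Prop :=
  ∀ A : Set V,
    2 * min (σ ⁻¹' (K ∩ A)).ncard (σ ⁻¹' (K ∩ Aᶜ)).ncard ≤ (cutPairs G K A).ncard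

theorem TwoWellLinked.of_subsingleton [Subsingleton ι] (G : SimpleGraph V) (K : Set V)
    (σ : ι → V) : TwoWellLinked G K σ := by
  intro A
  suffices min (σ ⁻¹' (K ∩ A)).ncard (σ ⁻¹' (K ∩ Aᶜ)).ncard = 0 by
    rw [this, mul_zero]
    exact Nat.zero_le _
  rcases (σ ⁻¹' (K ∩ A)).eq_empty_or_nonempty with h | ⟨i, hi⟩
  · rw [h, ncard_empty, Nat.zero_min]
  · have h : σ ⁻¹' (K ∩ Aᶜ) = ∅ :=
      eq_empty_of_forall_notMem fun i' hi' => hi'.2 (Subsingleton.elim i i' ▸ hi.2)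
    rw [h, ncard_empty, Nat.min_zero]

theorem ncard_preimage_le_two_mul [Finite κ] {f : ι → κ} {g : ι → Bool}
    (hfg : Injective fun i => (g i, f i)) (s : Set κ) : (f ⁻¹' s).ncard ≤ 2 * s.ncard :=
  calc (f ⁻¹' s).ncard ≤ ((univ : Set Bool) ×ˢ s).ncard :=
        ncard_le_ncard_of_injOn (fun i => (g i, f i)) (fun _ hi => ⟨mem_univ _, hi⟩) hfg.injOn
    _ = 2 * s.ncard := by rw [ncard_prod, ncard_univ, Nat.card_eq_fintype_card, Fintype.card_bool]

/-- The shape of `P_{n+1}` over `H = P_n`: two disjoint copies `copy (false, ·)`,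
`copy (true, ·)` of `H` inside `K`, the top symbol `j` being joined to the symbol
`σ (half j)` of both copies. `P_1 = K_{2,2}` has this shape over a one-vertex `H`. -/
structure BowtieStructure (G : SimpleGraph V) (H : SimpleGraph W) (K : Set V) (top : ι → V)
    (σ : κ → W) where
  half : ι → κ
  copy : Bool × W → V
  ncard_preimage_half : ∀ s, (half ⁻¹' s).ncard ≤ 2 * s.ncard
  top_injective : Injective top
  copy_injective : Injective copy
  top_ne_copy : ∀ j x, top j ≠ copy x
  copy_mem : ∀ x, copy x ∈ K
  adj_top_copy : ∀ j b, G.Adj (top j) (copy (b, σ (half j)))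
  adj_copy : ∀ b w w', H.Adj w w' → G.Adj (copy (b, w)) (copy (b, w'))

variable {G : SimpleGraph V} {H : SimpleGraph W} {K : Set V} {top : ι → V} {σ : κ → W}

namespace BowtieStructure

variable (B : BowtieStructure G H K top σ)

def pull (b : Bool) (A : Set V) : Set W := (fun w => B.copy (b, w)) ⁻¹' A

theorem pull_compl (b : Bool) (A : Set V) : B.pull b Aᶜ = (B.pull b A)ᶜ := rfl

def mismatch (b : Bool) (s : Set V) : Set ι :=
  {j | top j ∈ K ∩ s ∧ B.copy (b, σ (B.half j)) ∉ s}

theorem ncard_preimage_top_le [Finite ι] (b : Bool) (s : Set V) :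
    (top ⁻¹' (K ∩ s)).ncard ≤ (B.mismatch b s).ncard + 2 * (σ ⁻¹' B.pull b s).ncard := by
  have hsub : top ⁻¹' (K ∩ s) ⊆ B.mismatch b s ∪ B.half ⁻¹' (σ ⁻¹' B.pull b s) := by
    intro j hj
    by_cases h : B.copy (b, σ (B.half j)) ∈ s
    · exact Or.inr h
    · exact Or.inl ⟨hj, h⟩
  calc (top ⁻¹' (K ∩ s)).ncard
      ≤ (B.mismatch b s ∪ B.half ⁻¹' (σ ⁻¹' B.pull b s)).ncard := ncard_le_ncard hsub
    _ ≤ _ := (ncard_union_le _ _).trans (Nat.add_le_add_left (B.ncard_preimage_half _) _)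

def edge : Bool × (ι ⊕ ι ⊕ W × W) → V × V
  | (b, .inl j) => (top j, B.copy (b, σ (B.half j)))
  | (b, .inr (.inl j)) => (B.copy (b, σ (B.half j)), top j)
  | (b, .inr (.inr q)) => (B.copy (b, q.1), B.copy (b, q.2))

theorem edge_injective : Injective B.edge := by
  have hne : ∀ j b w, top j ≠ B.copy (b, w) := fun j b w => B.top_ne_copy j (b, w)
  rintro ⟨b, j | j | q⟩ ⟨b', j' | j' | q'⟩ h <;>
    simp [edge, Prod.ext_iff, B.top_injective.eq_iff, B.copy_injective.eq_iff, hne] at h ⊢ <;>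
    tauto

theorem sum_ncard_le_ncard_cutPairs [Finite V] (A : Set V) :
    ∑ b, ((B.mismatch b A).ncard + (B.mismatch b Aᶜ).ncard +
      (cutPairs H univ (B.pull b A)).ncard) ≤ (cutPairs G K A).ncard := by
  have : Finite ι := Finite.of_injective top B.top_injective
  have : Finite W := Finite.of_injective (fun w => B.copy (false, w))
    fun _ _ h => congrArg Prod.snd (B.copy_injective h)
  let Pieces := Σ b, B.mismatch b A ⊕ B.mismatch b Aᶜ ⊕ cutPairs H univ (B.pull b A)
  let flatten (x : Pieces) : Bool × (ι ⊕ ι ⊕ W × W) :=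
    (x.1, Sum.map Subtype.val (Sum.map Subtype.val Subtype.val) x.2)
  have hflatten : Injective flatten := by
    rintro ⟨b, x⟩ ⟨b', y⟩ h
    simp only [flatten, Prod.mk.injEq] at h
    obtain ⟨rfl, h⟩ := h
    rw [Sum.map_injective.mpr ⟨Subtype.val_injective,
      Sum.map_injective.mpr ⟨Subtype.val_injective, Subtype.val_injective⟩⟩ h]
  have hmaps : ∀ x, B.edge (flatten x) ∈ cutPairs G K A := by
    rintro ⟨b, ⟨j, hjK, hjA⟩ | ⟨j, hjK, hjA⟩ | ⟨q, -, -, hq, hq1, hq2⟩⟩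
    · exact ⟨hjK.1, B.copy_mem _, B.adj_top_copy j b, hjK.2, hjA⟩
    · exact ⟨B.copy_mem _, hjK.1, (B.adj_top_copy j b).symm, not_not.mp hjA, hjK.2⟩
    · exact ⟨B.copy_mem _, B.copy_mem _, B.adj_copy b _ _ hq, hq1, hq2⟩
  calc _ = Nat.card Pieces := by
        simp only [Pieces, Nat.card_sigma, Nat.card_sum, Nat.card_coe_set_eq, add_assoc]
    _ ≤ Nat.card (cutPairs G K A) :=
        Nat.card_le_card_of_injective (fun x => ⟨B.edge (flatten x), hmaps x⟩)
          fun _ _ h => hflatten (B.edge_injective (congrArg Subtype.val h))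
    _ = _ := Nat.card_coe_set_eq _

end BowtieStructure

theorem BowtieStructure.twoWellLinked [Finite V] (B : BowtieStructure G H K top σ)
    (hH : TwoWellLinked H univ σ) : TwoWellLinked G K top := by
  have : Finite ι := Finite.of_injective top B.top_injective
  intro A
  have hcopy (b : Bool) : min (top ⁻¹' (K ∩ A)).ncard (top ⁻¹' (K ∩ Aᶜ)).ncard ≤
      (B.mismatch b A).ncard + (B.mismatch b Aᶜ).ncard +
        (cutPairs H univ (B.pull b A)).ncard := by
    have hA := B.ncard_preimage_top_le b A
    have hAc := B.ncard_preimage_top_le b Aᶜ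
    have hH' := hH (B.pull b A)
    rw [B.pull_compl] at hAc
    simp only [univ_inter] at hH'
    omega
  calc 2 * min (top ⁻¹' (K ∩ A)).ncard (top ⁻¹' (K ∩ Aᶜ)).ncard
      = ∑ _b : Bool, min (top ⁻¹' (K ∩ A)).ncard (top ⁻¹' (K ∩ Aᶜ)).ncard := by simp
    _ ≤ _ := Finset.sum_le_sum fun b _ => hcopy b
    _ ≤ _ := B.sum_ncard_le_ncard_cutPairs A

end

theorem partWidth_induce_eq_ncard_cutPairs {V : Type} (G : SimpleGraph V) (K : Set V)
    (B : Set K) : partWidth (G.induce K) B = (cutPairs G K (Subtype.val '' B)).ncard := by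
  have hmem {u : K} : (u : V) ∈ Subtype.val '' B ↔ u ∈ B :=
    Subtype.val_injective.mem_set_image
  have himage : Prod.map Subtype.val Subtype.val ''
      {p : K × K | p.1 ∈ B ∧ p.2 ∉ B ∧ (G.induce K).Adj p.1 p.2} =
        cutPairs G K (Subtype.val '' B) := by
    ext ⟨u, v⟩
    constructor
    · rintro ⟨⟨u, v⟩, ⟨hu, hv, hadj⟩, h⟩
      obtain ⟨rfl, rfl⟩ := Prod.mk.inj h
      exact ⟨u.2, v.2, hadj, hmem.mpr hu, mt hmem.mp hv⟩
    · rintro ⟨hu, hv, hadj, huB, hvB⟩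
      exact ⟨(⟨u, hu⟩, ⟨v, hv⟩), ⟨hmem.mp huB, mt hmem.mpr hvB, hadj⟩, rfl⟩
  rw [partWidth, ← himage,
    ncard_image_of_injective _ (Subtype.val_injective.prodMap Subtype.val_injective)]

theorem TwoWellLinked.two_mul_min_le_partWidth_induce {V : Type} {ι : Type*}
    {G : SimpleGraph V} {K : Set V} {σ : ι → V} (h : TwoWellLinked G K σ) (B : Set K) :
    2 * min (σ ⁻¹' (Subtype.val '' B)).ncard (σ ⁻¹' (Subtype.val '' Bᶜ)).ncard ≤
      partWidth (G.induce K) B := by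
  have := h (Subtype.val '' B)
  rwa [inter_eq_right.mpr (Subtype.coe_image_subset K B), ← Set.sdiff_eq, ← image_val_compl,
    ← partWidth_induce_eq_ncard_cutPairs] at this

instance instFinitePV : ∀ k, Finite (PV k)
  | 0 => inferInstanceAs (Finite (Fin 2 ⊕ Fin 2))
  | k + 1 =>
    have := instFinitePV k
    inferInstanceAs (Finite (Fin (2 ^ (k + 2)) ⊕ (PV k ⊕ PV k)))

theorem sym_injective_s7 : ∀ k, Injective (sym k)
  | 0 => Sum.inl_injective
  | _ + 1 => Sum.inl_injective

def bowtieStructurePGZero (K : Set (PV 0)) (hK : (range (sym 0))ᶜ ⊆ K) :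
    BowtieStructure (PG 0) (⊥ : SimpleGraph Unit) K (sym 0) id where
  half _ := ()
  copy x := Sum.inr (finTwoEquiv.symm x.1)
  ncard_preimage_half := ncard_preimage_le_two_mul (g := finTwoEquiv)
    fun _ _ h => finTwoEquiv.injective (congrArg Prod.fst h)
  top_injective := sym_injective_s7 0
  copy_injective _ _ h := Prod.ext (finTwoEquiv.symm.injective (Sum.inr_injective h)) rfl
  top_ne_copy _ _ := Sum.inl_ne_inr
  copy_mem _ := hK fun ⟨_, h⟩ => Sum.inl_ne_inr h
  adj_top_copy _ _ :=
    (SimpleGraph.fromRel_adj _ _ _).mpr ⟨Sum.inl_ne_inr, Or.inl ⟨rfl, rfl⟩⟩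
  adj_copy _ _ _ h := h.elim

def halfFin {n : ℕ} (j : Fin (2 ^ (n + 2))) : Fin (2 ^ (n + 1)) :=
  ⟨j / 2, by grind⟩

def bowtieStructurePGSucc (n : ℕ) (K : Set (PV (n + 1))) (hK : (range (sym (n + 1)))ᶜ ⊆ K) :
    BowtieStructure (PG (n + 1)) (PG n) K (sym (n + 1)) (sym n) where
  half := halfFin
  copy x := Sum.inr (Equiv.boolProdEquivSum _ x)
  ncard_preimage_half := ncard_preimage_le_two_mul (g := fun j => decide ((j : ℕ) % 2 = 1))
    fun a b h => by
      simp only [Prod.mk.injEq, halfFin, Fin.mk.injEq, decide_eq_decide] at h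
      exact Fin.ext (by omega)
  top_injective := sym_injective_s7 (n + 1)
  copy_injective _ _ h := (Equiv.boolProdEquivSum _).injective (Sum.inr_injective h)
  top_ne_copy _ _ := Sum.inl_ne_inr
  copy_mem _ := hK fun ⟨_, h⟩ => Sum.inl_ne_inr h
  adj_top_copy j b := (SimpleGraph.fromRel_adj _ _ _).mpr
    ⟨Sum.inl_ne_inr, Or.inl ⟨halfFin j, rfl, by cases b <;> simp [Equiv.boolProdEquivSum]⟩⟩
  adj_copy b _ _ h := (SimpleGraph.fromRel_adj _ _ _).mpr
    ⟨fun heq => h.ne (Prod.ext_iff.mp ((Equiv.boolProdEquivSum _).injective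
      (Sum.inr_injective heq))).2, Or.inl (by cases b <;> exact h)⟩

theorem twoWellLinked_PG : ∀ (k : ℕ) {K : Set (PV k)}, (range (sym k))ᶜ ⊆ K →
    TwoWellLinked (PG k) K (sym k)
  | 0, K, hK => (bowtieStructurePGZero K hK).twoWellLinked (.of_subsingleton _ _ _)
  | n + 1, K, hK =>
    (bowtieStructurePGSucc n K hK).twoWellLinked (twoWellLinked_PG n (subset_univ _))

theorem ncard_inter_range_sym_s7 {k : ℕ} {S : Set (PV k)} (C : Set S) :
    (C ∩ Subtype.val ⁻¹' range (sym k)).ncard = (sym k ⁻¹' (Subtype.val '' C)).ncard := by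
  rw [← ncard_image_of_injective _ Subtype.val_injective, image_inter_preimage,
    ← image_preimage_eq_inter_range, ncard_image_of_injective _ (sym_injective_s7 k)]

theorem unfrozen_symbols_eq {k : ℕ} {Abar : Finset (Fin (2 ^ (k + 1)))} {S : Set (PV k)}
    (hS : S = {v : PV k | ∀ j ∈ Abar, v ≠ sym k j}) :
    {v : S | ∃ j, j ∉ Abar ∧ (v : PV k) = sym k j} = Subtype.val ⁻¹' range (sym k) := by
  subst hS
  ext v
  constructor
  · rintro ⟨j, -, hj⟩
    exact ⟨j, hj.symm⟩
  · rintro ⟨j, hj⟩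
    exact ⟨j, fun hjA => v.2 j hjA hj.symm, hj.symm⟩

theorem ncard_symbols_add_card_frozen {k : ℕ} {Abar : Finset (Fin (2 ^ (k + 1)))}
    {S : Set (PV k)} (hS : S = {v : PV k | ∀ j ∈ Abar, v ≠ sym k j}) :
    (Subtype.val ⁻¹' range (sym k) : Set S).ncard + Abar.card = 2 ^ (k + 1) := by
  have hsymS : sym k ⁻¹' S = (Abar : Set _)ᶜ := by
    ext j
    simp [hS, (sym_injective_s7 k).eq_iff]
  rw [← univ_inter (Subtype.val ⁻¹' _), ncard_inter_range_sym_s7, image_univ, Subtype.range_coe,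
    hsymS, ncard_compl, ncard_coe_finset, Nat.card_eq_fintype_card, Fintype.card_fin,
    Nat.sub_add_cancel (by simpa using Abar.card_le_univ)]

-- For `a = 0` the bound needs `t = f`, which holds because `t + f` is even.
theorem sub_three_mul_le_two_mul_min {t f a M : ℕ} (hsum : t + f + a = 2 * M)
    (hbal : |(t : ℤ) - f| ≤ 1) : 2 * (M : ℤ) - 3 * a ≤ 2 * min t f := by
  rw [abs_le] at hbal
  omega

theorem frozen_polar_graph_bisection_bound_general (k : ℕ) (Abar : Finset (Fin (2 ^ (k + 1))))
    (R : ℝ) (hR : R = 1 - (Abar.card : ℝ) / 2 ^ (k + 1))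
    (S : Set (PV k)) (hS : S = {v : PV k | ∀ j ∈ Abar, v ≠ sym k j})
    (X : Set ↥S) (hX : X = {v : ↥S | ∃ j : Fin (2 ^ (k + 1)), j ∉ Abar ∧ (v : PV k) = sym k j})
    (B : Set ↥S)
    (hbal : |((B ∩ X).ncard : ℤ) - ((Bᶜ ∩ X).ncard : ℤ)| ≤ 1) :
    (2 ^ (k + 1) : ℝ) * (3 * R - 2) ≤ partWidth ((PG k).induce S) B := by
  rw [unfrozen_symbols_eq hS] at hX
  have hK : (range (sym k))ᶜ ⊆ S := fun v hv => hS ▸ fun j _ h => hv ⟨j, h.symm⟩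
  have hcut := (twoWellLinked_PG k hK).two_mul_min_le_partWidth_induce B
  rw [← ncard_inter_range_sym_s7, ← ncard_inter_range_sym_s7, ← hX] at hcut
  have hsum : (B ∩ X).ncard + (Bᶜ ∩ X).ncard + Abar.card = 2 * 2 ^ k := by
    rw [inter_comm B, inter_comm Bᶜ, ← Set.sdiff_eq, ncard_inter_add_ncard_sdiff_eq_ncard, hX,
      ncard_symbols_add_card_frozen hS, pow_succ']
  have hlower : 2 * 2 ^ k - 3 * (Abar.card : ℤ) ≤ partWidth ((PG k).induce S) B :=
    (sub_three_mul_le_two_mul_min hsum hbal).trans (by exact_mod_cast hcut)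
  have hN : (2 ^ (k + 1) : ℝ) * (3 * R - 2) = 2 * 2 ^ k - 3 * Abar.card := by
    rw [hR]
    field_simp
    ring
  rw [hN]
  exact_mod_cast hlower

/-- Let `N = 2^(k+1)` and let `𝒜̄ ⊆ {1,…,N}` be frozen indices defining
the `(k+1)`-frozen-bit polar decoding graph (the graph induced by `P_{k+1}` on the
vertices that are not frozen symbol nodes), of rate `R = 1 − |𝒜̄|/N > 2/3`.  Then every
bisection of the unfrozen nodes of this graph has width at least `N(3R − 2)`; that is,
the minimum bisection width `ω` of the unfrozen nodes satisfies `ω ≥ N(3R − 2)`. -/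
theorem frozen_polar_graph_bisection_bound (k : ℕ) (Abar : Finset (Fin (2 ^ (k + 1))))
    (R : ℝ) (hR : R = 1 - (Abar.card : ℝ) / 2 ^ (k + 1)) (hR23 : 2 / 3 < R)
    (S : Set (PV k)) (hS : S = {v : PV k | ∀ j ∈ Abar, v ≠ sym k j})
    (X : Set ↥S) (hX : X = {v : ↥S | ∃ j : Fin (2 ^ (k + 1)), j ∉ Abar ∧ (v : PV k) = sym k j})
    (B : Set ↥S)
    (hbal : |((B ∩ X).ncard : ℤ) - ((Bᶜ ∩ X).ncard : ℤ)| ≤ 1) :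
    (2 ^ (k + 1) : ℝ) * (3 * R - 2) ≤ partWidth ((PG k).induce S) B :=
  frozen_polar_graph_bisection_bound_general k Abar R hR S hS X hX B hbal
end
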